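/- arXiv:2412.14605 — 13 statements merged into one kernel-verified Lean document; each statement's English description precedes it below -/
import Mathlib

section
/- If (A, ·, α) is a commutative averaging algebra, then the operation a • b := α(a)·b makes A into a (left) perm algebra, i.e. a•(b•c) = (a•b)•c = (b•a)•c for all a, b, c ∈ A. -/
/-- For a commutative averaging algebra, a • b := α(a)·b is a
(left) perm algebra product. -/
theorem stmt2 {k A : Type*} [Field k] [NonUnitalCommRing A] [Module k A]
    [SMulCommClass k A A] [IsScalarTower k A A]
    (α : A →ₗ[k] A)
    (havg : ∀ a b : A, α a * α b = α (α a * b) ∧ α a * α b = α (a * α b)) :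
    ∀ a b c : A,
      α a * (α b * c) = α (α a * b) * c ∧
      α (α a * b) * c = α (α b * a) * c := by
  intro a b c
  have h1 := (havg a b).1
  have h2 : α (α b * a) = α a * α b := by
    rw [← (havg b a).1, mul_comm]
  constructor
  · rw [← h1, mul_assoc]
  · rw [← h1, h2]
end

section
/- Let (A, α) be an averaging algebra, M a vector space, ℓ, r : A → End(M) and β : M → M linear maps. Then the semidirect product A ⊕ M with product (a₁,m₁)(a₂,m₂) = (a₁a₂, ℓ(a₁)m₂ + r(a₂)m₁) together with the map α ⊕ β is an averaging algebra if and only if (M, ℓ, r, β) is a bimodule over the averaging algebra (A, α). -/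
/-- the semidirect product A ⊕ M with α ⊕ β is an averaging
algebra iff (M, ℓ, r, β) is a bimodule over the averaging algebra (A, α). -/
theorem stmt3 {k A M : Type*} [Field k] [NonUnitalRing A] [Module k A]
    [SMulCommClass k A A] [IsScalarTower k A A]
    [AddCommGroup M] [Module k M]
    (α : A →ₗ[k] A)
    (havg : ∀ a b : A, α a * α b = α (α a * b) ∧ α a * α b = α (a * α b))
    (ℓ r : A →ₗ[k] M →ₗ[k] M) (β : M →ₗ[k] M) :
    (let mul : A × M → A × M → A × M :=
      fun p q => (p.1 * q.1, ℓ p.1 q.2 + r q.1 p.2)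
     let ab : A × M → A × M := fun p => (α p.1, β p.2)
     (∀ x y z : A × M, mul (mul x y) z = mul x (mul y z)) ∧
     (∀ x y : A × M, mul (ab x) (ab y) = ab (mul (ab x) y) ∧
        mul (ab x) (ab y) = ab (mul x (ab y)))) ↔
    ((∀ (a b : A) (m : M), ℓ (a * b) m = ℓ a (ℓ b m)) ∧
     (∀ (a b : A) (m : M), r (a * b) m = r b (r a m)) ∧
     (∀ (a b : A) (m : M), r b (ℓ a m) = ℓ a (r b m)) ∧
     (∀ (a : A) (m : M), ℓ (α a) (β m) = β (ℓ (α a) m)) ∧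
     (∀ (a : A) (m : M), β (ℓ (α a) m) = β (ℓ a (β m))) ∧
     (∀ (a : A) (m : M), r (α a) (β m) = β (r (α a) m)) ∧
     (∀ (a : A) (m : M), β (r (α a) m) = β (r a (β m)))) := by
  simp only
  constructor
  · rintro ⟨hassoc, havgsd⟩
    have h4 : ∀ (a : A) (m : M), ℓ (α a) (β m) = β (ℓ (α a) m) := by
      intro a m
      have := congrArg Prod.snd ((havgsd (a, 0) (0, m)).1)
      simpa using this
    have h4' : ∀ (a : A) (m : M), ℓ (α a) (β m) = β (ℓ a (β m)) := by
      intro a m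
      have := congrArg Prod.snd ((havgsd (a, 0) (0, m)).2)
      simpa using this
    have h6 : ∀ (a : A) (m : M), r (α a) (β m) = β (r (α a) m) := by
      intro a m
      have := congrArg Prod.snd ((havgsd (0, m) (a, 0)).2)
      simpa using this
    have h6' : ∀ (a : A) (m : M), r (α a) (β m) = β (r a (β m)) := by
      intro a m
      have := congrArg Prod.snd ((havgsd (0, m) (a, 0)).1)
      simpa using this
    refine ⟨?_, ?_, ?_, h4, ?_, h6, ?_⟩
    · intro a b m
      have := congrArg Prod.snd (hassoc (a, 0) (b, 0) (0, m))
      simpa using this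
    · intro a b m
      have := congrArg Prod.snd (hassoc (0, m) (a, 0) (b, 0))
      simpa using this.symm
    · intro a b m
      have := congrArg Prod.snd (hassoc (a, 0) (0, m) (b, 0))
      simpa using this
    · intro a m
      rw [← h4, h4']
    · intro a m
      rw [← h6, h6']
  · rintro ⟨h1, h2, h3, h4, h5, h6, h7⟩
    refine ⟨?_, ?_⟩
    · rintro ⟨a, m⟩ ⟨b, n⟩ ⟨c, p⟩
      refine Prod.ext (mul_assoc a b c) ?_
      simp only [map_add, h1, h2, h3]
      abel
    · rintro ⟨a, m⟩ ⟨b, n⟩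
      refine ⟨Prod.ext (havg a b).1 ?_, Prod.ext (havg a b).2 ?_⟩
      · simp only [map_add, h4, ← h7, h6]
      · simp only [map_add, h6, ← h5, h4]
end

section
/- Let (A, α) be a finite-dimensional averaging algebra, (M, ℓ, r) a bimodule over the associative algebra A, and β : M → M a linear map. Then (M*, r*, ℓ*, β*) is a bimodule over the averaging algebra (A, α) if and only if (M, ℓ, r, β) is a bimodule over (A, α). -/
lemma dual_sep {k M : Type*} [Field k] [AddCommGroup M] [Module k M]
    {x y : M} (h : ∀ ξ : Module.Dual k M, ξ x = ξ y) : x = y := by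
  rw [← sub_eq_zero, ← Module.forall_dual_apply_eq_zero_iff k]
  intro φ
  simp [h φ, sub_eq_zero]

/-- (M*, r*, ℓ*, β*) is a bimodule over the averaging algebra (A, α)
iff (M, ℓ, r, β) is a bimodule over (A, α). -/
theorem stmt4 {k A M : Type*} [Field k] [NonUnitalRing A] [Module k A]
    [SMulCommClass k A A] [IsScalarTower k A A] [FiniteDimensional k A]
    [AddCommGroup M] [Module k M] [FiniteDimensional k M]
    (α : A →ₗ[k] A)
    (havg : ∀ a b : A, α a * α b = α (α a * b) ∧ α a * α b = α (a * α b))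
    (ℓ r : A →ₗ[k] M →ₗ[k] M)
    (hbim : (∀ (a b : A) (m : M), ℓ (a * b) m = ℓ a (ℓ b m)) ∧
            (∀ (a b : A) (m : M), r (a * b) m = r b (r a m)) ∧
            (∀ (a b : A) (m : M), r b (ℓ a m) = ℓ a (r b m)))
    (β : M →ₗ[k] M) :
    (let ℓ' : A → Module.Dual k M →ₗ[k] Module.Dual k M := fun a => (r a).dualMap
     let r' : A → Module.Dual k M →ₗ[k] Module.Dual k M := fun a => (ℓ a).dualMap
     let β' : Module.Dual k M →ₗ[k] Module.Dual k M := β.dualMap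
     (∀ (a b : A) (ξ : Module.Dual k M), ℓ' (a * b) ξ = ℓ' a (ℓ' b ξ)) ∧
     (∀ (a b : A) (ξ : Module.Dual k M), r' (a * b) ξ = r' b (r' a ξ)) ∧
     (∀ (a b : A) (ξ : Module.Dual k M), r' b (ℓ' a ξ) = ℓ' a (r' b ξ)) ∧
     (∀ (a : A) (ξ : Module.Dual k M), ℓ' (α a) (β' ξ) = β' (ℓ' (α a) ξ)) ∧
     (∀ (a : A) (ξ : Module.Dual k M), β' (ℓ' (α a) ξ) = β' (ℓ' a (β' ξ))) ∧
     (∀ (a : A) (ξ : Module.Dual k M), r' (α a) (β' ξ) = β' (r' (α a) ξ)) ∧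
     (∀ (a : A) (ξ : Module.Dual k M), β' (r' (α a) ξ) = β' (r' a (β' ξ)))) ↔
    ((∀ (a : A) (m : M), ℓ (α a) (β m) = β (ℓ (α a) m)) ∧
     (∀ (a : A) (m : M), β (ℓ (α a) m) = β (ℓ a (β m))) ∧
     (∀ (a : A) (m : M), r (α a) (β m) = β (r (α a) m)) ∧
     (∀ (a : A) (m : M), β (r (α a) m) = β (r a (β m)))) := by
  dsimp only
  obtain ⟨hb1, hb2, hb3⟩ := hbim
  constructor
  · rintro ⟨-, -, -, h4, h5, h6, h7⟩
    have e1 : ∀ (a : A) (m : M), ℓ (α a) (β m) = β (ℓ (α a) m) := fun a m => by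
      refine dual_sep (k := k) fun ξ => ?_
      have := DFunLike.congr_fun (h6 a ξ) m
      simpa using this.symm
    have e3 : ∀ (a : A) (m : M), r (α a) (β m) = β (r (α a) m) := fun a m => by
      refine dual_sep (k := k) fun ξ => ?_
      have := DFunLike.congr_fun (h4 a ξ) m
      simpa using this.symm
    refine ⟨e1, fun a m => ?_, e3, fun a m => ?_⟩
    · rw [← e1]
      refine dual_sep (k := k) fun ξ => ?_
      have := DFunLike.congr_fun (h7 a ξ) m
      simpa using this
    · rw [← e3]
      refine dual_sep (k := k) fun ξ => ?_
      have := DFunLike.congr_fun (h5 a ξ) m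
      simpa using this
  · rintro ⟨e1, e2, e3, e4⟩
    refine ⟨fun a b ξ => ?_, fun a b ξ => ?_, fun a b ξ => ?_, fun a ξ => ?_,
      fun a ξ => ?_, fun a ξ => ?_, fun a ξ => ?_⟩ <;> ext m
    · simp [hb2]
    · simp [hb1]
    · simp [hb3]
    · simp [e3]
    · simp [← e4, e3]
    · simp [e1]
    · simp [← e2, e1]
end

section
/- Let (A, α) and (B, β) be averaging algebras and suppose (A, B, ℓ_A, r_A, ℓ_B, r_B) is a matched pair of associative algebras. Then the direct-sum map α ⊕ β is an averaging operator on the matched-pair algebra A ⋈ B if and only if (A, ℓ_B, r_B, α) is a bimodule over the averaging algebra (B, β) and (B, ℓ_A, r_A, β) is a bimodule over the averaging algebra (A, α). -/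
/-- α ⊕ β is an averaging operator on the matched-pair algebra A ⋈ B
iff (A, ℓ_B, r_B, α) is a bimodule over (B, β) and (B, ℓ_A, r_A, β) is a bimodule
over (A, α). -/
theorem stmt5 {k A B : Type*} [Field k]
    [NonUnitalRing A] [Module k A] [SMulCommClass k A A] [IsScalarTower k A A]
    [NonUnitalRing B] [Module k B] [SMulCommClass k B B] [IsScalarTower k B B]
    (ℓA rA : A →ₗ[k] B →ₗ[k] B) (ℓB rB : B →ₗ[k] A →ₗ[k] A)
    (α : A →ₗ[k] A)
    (hα : ∀ a b : A, α a * α b = α (α a * b) ∧ α a * α b = α (a * α b))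
    (β : B →ₗ[k] B)
    (hβ : ∀ a b : B, β a * β b = β (β a * b) ∧ β a * β b = β (a * β b))
    (mul : A × B → A × B → A × B)
    (hmul : ∀ p q : A × B, mul p q =
      (p.1 * q.1 + ℓB p.2 q.1 + rB q.2 p.1, p.2 * q.2 + ℓA p.1 q.2 + rA q.1 p.2))
    (hassoc : ∀ x y z : A × B, mul (mul x y) z = mul x (mul y z)) :
    (∀ x y : A × B,
       mul ((α x.1, β x.2)) ((α y.1, β y.2)) = (α (mul ((α x.1, β x.2)) y).1, β (mul ((α x.1, β x.2)) y).2) ∧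
       mul ((α x.1, β x.2)) ((α y.1, β y.2)) = (α (mul x ((α y.1, β y.2))).1, β (mul x ((α y.1, β y.2))).2)) ↔
    (((∀ (b c : B) (a : A), ℓB (b * c) a = ℓB b (ℓB c a)) ∧
      (∀ (b c : B) (a : A), rB (b * c) a = rB c (rB b a)) ∧
      (∀ (b c : B) (a : A), rB c (ℓB b a) = ℓB b (rB c a)) ∧
      (∀ (b : B) (a : A), ℓB (β b) (α a) = α (ℓB (β b) a)) ∧
      (∀ (b : B) (a : A), α (ℓB (β b) a) = α (ℓB b (α a))) ∧
      (∀ (b : B) (a : A), rB (β b) (α a) = α (rB (β b) a)) ∧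
      (∀ (b : B) (a : A), α (rB (β b) a) = α (rB b (α a)))) ∧
     ((∀ (a c : A) (b : B), ℓA (a * c) b = ℓA a (ℓA c b)) ∧
      (∀ (a c : A) (b : B), rA (a * c) b = rA c (rA a b)) ∧
      (∀ (a c : A) (b : B), rA c (ℓA a b) = ℓA a (rA c b)) ∧
      (∀ (a : A) (b : B), ℓA (α a) (β b) = β (ℓA (α a) b)) ∧
      (∀ (a : A) (b : B), β (ℓA (α a) b) = β (ℓA a (β b))) ∧
      (∀ (a : A) (b : B), rA (α a) (β b) = β (rA (α a) b)) ∧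
      (∀ (a : A) (b : B), β (rA (α a) b) = β (rA a (β b))))) := by
  -- consequences of associativity alone
  have hB1 : ∀ (b c : B) (a : A), ℓB (b * c) a = ℓB b (ℓB c a) := by
    intro b c a
    have g := hassoc (0,b) (0,c) (a,0)
    simp [hmul, Prod.ext_iff] at g
    exact g.1
  have hB2 : ∀ (b c : B) (a : A), rB (b * c) a = rB c (rB b a) := by
    intro b c a
    have g := hassoc (a,0) (0,b) (0,c)
    simp [hmul, Prod.ext_iff] at g
    exact g.1.symm
  have hB3 : ∀ (b c : B) (a : A), rB c (ℓB b a) = ℓB b (rB c a) := by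
    intro b c a
    have g := hassoc (0,b) (a,0) (0,c)
    simp [hmul, Prod.ext_iff] at g
    exact g.1
  have hA1 : ∀ (a c : A) (b : B), ℓA (a * c) b = ℓA a (ℓA c b) := by
    intro a c b
    have g := hassoc (a,0) (c,0) (0,b)
    simp [hmul, Prod.ext_iff] at g
    exact g.2
  have hA2 : ∀ (a c : A) (b : B), rA (a * c) b = rA c (rA a b) := by
    intro a c b
    have g := hassoc (0,b) (a,0) (c,0)
    simp [hmul, Prod.ext_iff] at g
    exact g.2.symm
  have hA3 : ∀ (a c : A) (b : B), rA c (ℓA a b) = ℓA a (rA c b) := by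
    intro a c b
    have g := hassoc (a,0) (0,b) (c,0)
    simp [hmul, Prod.ext_iff] at g
    exact g.2
  constructor
  · intro h
    have h1 := fun (b : B) (a : A) => (h (0,b) (a,0)).1
    have h2 := fun (b : B) (a : A) => (h (0,b) (a,0)).2
    have h3 := fun (b : B) (a : A) => (h (a,0) (0,b)).1
    have h4 := fun (b : B) (a : A) => (h (a,0) (0,b)).2
    simp [hmul, Prod.ext_iff] at h1 h2 h3 h4
    refine ⟨⟨hB1, hB2, hB3, fun b a => (h1 b a).1,
        fun b a => ((h1 b a).1).symm.trans (h2 b a).1,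
        fun b a => (h4 b a).1,
        fun b a => ((h4 b a).1).symm.trans (h3 b a).1⟩,
      ⟨hA1, hA2, hA3, fun a b => (h3 b a).2,
        fun a b => ((h3 b a).2).symm.trans (h4 b a).2,
        fun a b => (h2 b a).2,
        fun a b => ((h2 b a).2).symm.trans (h1 b a).2⟩⟩
  · rintro ⟨⟨_, _, _, hB4, hB5, hB6, hB7⟩, ⟨_, _, _, hA4, hA5, hA6, hA7⟩⟩
    rintro ⟨a₁, b₁⟩ ⟨a₂, b₂⟩
    simp only [hmul, Prod.ext_iff, map_add]
    refine ⟨⟨?_, ?_⟩, ?_, ?_⟩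
    · rw [(hα a₁ a₂).1, hB4, hB6, hB7]
    · rw [(hβ b₁ b₂).1, hA4, hA6, hA7]
    · rw [(hα a₁ a₂).2, hB6, ← hB5, hB4]
    · rw [(hβ b₁ b₂).2, hA6, ← hA5, hA4]
end

section
/- Let (A, α, 𝔅) be a finite-dimensional symmetric averaging Frobenius algebra and let α̂ be the adjoint of α with respect to 𝔅. Then (A, ℓ_A, r_A, α̂) is a bimodule over the averaging algebra (A, α), where ℓ_A, r_A denote left and right multiplication. -/
/-- for a symmetric averaging Frobenius algebra (A, α, 𝔅) with
adjoint α̂, (A, ℓ_A, r_A, α̂) is a bimodule over the averaging algebra (A, α). -/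
theorem stmt6 {k A : Type*} [Field k] [NonUnitalRing A] [Module k A]
    [SMulCommClass k A A] [IsScalarTower k A A] [FiniteDimensional k A]
    (α : A →ₗ[k] A)
    (havg : ∀ a b : A, α a * α b = α (α a * b) ∧ α a * α b = α (a * α b))
    (B : A →ₗ[k] A →ₗ[k] k)
    (hnd : ∀ a : A, (∀ b : A, B a b = 0) → a = 0)
    (hsym : ∀ a b : A, B a b = B b a)
    (hinv : ∀ a b c : A, B (a * b) c = B a (b * c))
    (αh : A →ₗ[k] A)
    (hadj : ∀ a b : A, B (α a) b = B a (αh b)) :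
    (∀ a m : A, α a * αh m = αh (α a * m)) ∧
    (∀ a m : A, αh (α a * m) = αh (a * αh m)) ∧
    (∀ a m : A, αh m * α a = αh (m * α a)) ∧
    (∀ a m : A, αh (m * α a) = αh (αh m * a)) := by
  have key : ∀ x y : A, (∀ c : A, B x c = B y c) → x = y := by
    intro x y h
    have : x - y = 0 := hnd _ (fun c => by
      simp [map_sub, LinearMap.sub_apply, h c])
    exact sub_eq_zero.mp this
  -- B (αh x) c = B (α c) x
  have hadj' : ∀ x c : A, B (αh x) c = B (α c) x := by
    intro x c
    rw [hsym, ← hadj]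
  -- canonical form for left side computations
  have L1 : ∀ a m c : A, B (α a * αh m) c = B (α (c * α a)) m := by
    intro a m c
    rw [hinv, hsym, hinv, hsym, ← hadj]
  have R1 : ∀ a m c : A, B (αh (α a * m)) c = B (α (c * α a)) m := by
    intro a m c
    rw [hadj', ← hinv, (havg c a).2]
  have R2 : ∀ a m c : A, B (αh (a * αh m)) c = B (α (c * α a)) m := by
    intro a m c
    rw [hadj', ← hinv, ← hadj, ← (havg c a).1, (havg c a).2]
  have L3 : ∀ a m c : A, B (αh m * α a) c = B (α (α a * c)) m := by
    intro a m c
    rw [hinv, hsym, ← hadj]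
  have R3 : ∀ a m c : A, B (αh (m * α a)) c = B (α (α a * c)) m := by
    intro a m c
    rw [hadj', hsym, hinv, hsym, (havg a c).1]
  have R4 : ∀ a m c : A, B (αh (αh m * a)) c = B (α (α a * c)) m := by
    intro a m c
    rw [hadj', hsym, hinv, hadj' m, ← (havg a c).2, (havg a c).1]
  exact ⟨fun a m => key _ _ fun c => (L1 a m c).trans (R1 a m c).symm,
         fun a m => key _ _ fun c => (R1 a m c).trans (R2 a m c).symm,
         fun a m => key _ _ fun c => (L3 a m c).trans (R3 a m c).symm,
         fun a m => key _ _ fun c => (R3 a m c).trans (R4 a m c).symm⟩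
end

section
/- Let (A, ≻, ≺, α) be an averaging dendriform algebra with associated averaging algebra (A, ·, α) where a·b = a≻b + a≺b. Define ℓ_≻(a)(b) = a≻b and r_≺(a)(b) = b≺a. Then (A, ℓ_≻, r_≺, α) is a bimodule over the averaging algebra (A, ·, α), and the identity map id : A → A is an O-operator of (A, α) associated to this bimodule. -/
/-- (A, ℓ_≻, r_≺, α) is a bimodule over the associated averaging
algebra (A, ·, α), and id is an O-operator of (A, α) associated to it. -/
theorem stmt9 {k A : Type*} [Field k] [AddCommGroup A] [Module k A]
    (s p : A →ₗ[k] A →ₗ[k] A)  -- s = ≻, p = ≺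
    (h1 : ∀ a b c : A, p (p a b) c = p a (p b c + s b c))
    (h2 : ∀ a b c : A, p (s a b) c = s a (p b c))
    (h3 : ∀ a b c : A, s (p a b + s a b) c = s a (s b c))
    (α : A →ₗ[k] A)
    (hs : ∀ a b : A, s (α a) (α b) = α (s (α a) b) ∧ s (α a) (α b) = α (s a (α b)))
    (hp : ∀ a b : A, p (α a) (α b) = α (p (α a) b) ∧ p (α a) (α b) = α (p a (α b))) :
    -- (A, ℓ_≻, r_≺) is a bimodule over the associated algebra a·b = s a b + p a b
    ((∀ a b m : A, s (s a b + p a b) m = s a (s b m)) ∧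
     (∀ a b m : A, p m (s a b + p a b) = p (p m a) b) ∧
     (∀ a b m : A, p (s a m) b = s a (p m b)) ∧
     -- averaging-bimodule conditions with operator α
     (∀ a m : A, s (α a) (α m) = α (s (α a) m)) ∧
     (∀ a m : A, α (s (α a) m) = α (s a (α m))) ∧
     (∀ a m : A, p (α m) (α a) = α (p m (α a))) ∧
     (∀ a m : A, α (p m (α a)) = α (p (α m) a))) ∧
    -- id is an O-operator: α ∘ id = id ∘ α and
    -- id m₁ · id m₂ = id (ℓ(id m₁) m₂ + r(id m₂) m₁)
    (α.comp (LinearMap.id : A →ₗ[k] A) = (LinearMap.id : A →ₗ[k] A).comp α ∧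
     ∀ m₁ m₂ : A,
       s ((LinearMap.id : A →ₗ[k] A) m₁) ((LinearMap.id : A →ₗ[k] A) m₂)
         + p ((LinearMap.id : A →ₗ[k] A) m₁) ((LinearMap.id : A →ₗ[k] A) m₂)
         = (LinearMap.id : A →ₗ[k] A)
             (s ((LinearMap.id : A →ₗ[k] A) m₁) m₂ + p m₁ ((LinearMap.id : A →ₗ[k] A) m₂))) := by
  refine ⟨⟨?_, ?_, ?_, ?_, ?_, ?_, ?_⟩, ?_, ?_⟩
  · intro a b m; rw [add_comm (s a b)]; exact h3 a b m
  · intro a b m; rw [add_comm (s a b)]; exact (h1 m a b).symm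
  · intro a b m; exact h2 a m b
  · intro a m; exact (hs a m).1
  · intro a m; rw [← (hs a m).1, (hs a m).2]
  · intro a m; exact (hp m a).2
  · intro a m; rw [← (hp m a).2, (hp m a).1]
  · rfl
  · intro m₁ m₂; simp
end

section
/- Let P : M → A be an O-operator of an averaging algebra (A, α) associated to a bimodule (M, ℓ, r, β). Then the operations m₁ ≻ m₂ := ℓ(P(m₁))(m₂) and m₁ ≺ m₂ := r(P(m₂))(m₁) together with β make (M, ≻, ≺, β) an averaging dendriform algebra. -/
/-- an O-operator P of an averaging algebra (A, α) associated to a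
bimodule (M, ℓ, r, β) induces an averaging dendriform algebra structure on M,
with m₁ ≻ m₂ = ℓ(P m₁) m₂ and m₁ ≺ m₂ = r(P m₂) m₁. -/
theorem stmt10 {k A M : Type*} [Field k] [NonUnitalRing A] [Module k A]
    [SMulCommClass k A A] [IsScalarTower k A A]
    [AddCommGroup M] [Module k M]
    (α : A →ₗ[k] A)
    (havg : ∀ a b : A, α a * α b = α (α a * b) ∧ α a * α b = α (a * α b))
    (ℓ r : A →ₗ[k] M →ₗ[k] M) (β : M →ₗ[k] M)
    (hbim : (∀ (a b : A) (m : M), ℓ (a * b) m = ℓ a (ℓ b m)) ∧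
            (∀ (a b : A) (m : M), r (a * b) m = r b (r a m)) ∧
            (∀ (a b : A) (m : M), r b (ℓ a m) = ℓ a (r b m)) ∧
            (∀ (a : A) (m : M), ℓ (α a) (β m) = β (ℓ (α a) m)) ∧
            (∀ (a : A) (m : M), β (ℓ (α a) m) = β (ℓ a (β m))) ∧
            (∀ (a : A) (m : M), r (α a) (β m) = β (r (α a) m)) ∧
            (∀ (a : A) (m : M), β (r (α a) m) = β (r a (β m))))
    (P : M →ₗ[k] A)
    (hPcomm : ∀ m : M, α (P m) = P (β m))
    (hO : ∀ m₁ m₂ : M, P m₁ * P m₂ = P (ℓ (P m₁) m₂ + r (P m₂) m₁)) :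
    -- dendriform axioms for ≻ := ℓ(P ·) ·, ≺ := r(P ·) ·
    (∀ m n u : M, r (P u) (r (P n) m) = r (P (r (P u) n + ℓ (P n) u)) m) ∧
    (∀ m n u : M, r (P u) (ℓ (P m) n) = ℓ (P m) (r (P u) n)) ∧
    (∀ m n u : M, ℓ (P (r (P n) m + ℓ (P m) n)) u = ℓ (P m) (ℓ (P n) u)) ∧
    -- β is an averaging operator for ≻ and ≺
    (∀ m n : M, ℓ (P (β m)) (β n) = β (ℓ (P (β m)) n) ∧
                ℓ (P (β m)) (β n) = β (ℓ (P m) (β n))) ∧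
    (∀ m n : M, r (P (β n)) (β m) = β (r (P (β n)) m) ∧
                r (P (β n)) (β m) = β (r (P n) (β m))) := by
  obtain ⟨hl, hr, hlr, h4, h5, h6, h7⟩ := hbim
  refine ⟨?_, ?_, ?_, ?_, ?_⟩
  · intro m n u
    have := hO n u
    rw [add_comm (r (P u) n)]
    rw [← this, hr]
  · intro m n u
    exact hlr _ _ _
  · intro m n u
    have := hO m n
    rw [add_comm (r (P n) m), ← this, hl]
  · intro m n
    have h1 : ℓ (P (β m)) (β n) = β (ℓ (P (β m)) n) := by
      rw [← hPcomm m]; exact h4 _ _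
    refine ⟨h1, ?_⟩
    rw [h1, ← hPcomm m, h5]
  · intro m n
    have h1 : r (P (β n)) (β m) = β (r (P (β n)) m) := by
      rw [← hPcomm n]; exact h6 _ _
    refine ⟨h1, ?_⟩
    rw [h1, ← hPcomm n, h7]
end

section
/- Let (A, ·, α) be an averaging algebra and R : A → A a Rota-Baxter operator of weight λ commuting with α. Then the new multiplication a ∘ b := R(a)·b + a·R(b) + λ a·b makes (A, ∘, α) an averaging algebra, and R : (A, ∘, α) → (A, ·, α) is a homomorphism of averaging algebras. -/
/-- a Rota-Baxter operator R of weight λ commuting with α gives a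
new averaging algebra (A, ∘, α) with a ∘ b = R(a)b + aR(b) + λab, and
R : (A, ∘, α) → (A, ·, α) is a homomorphism of averaging algebras. -/
theorem stmt11 {k A : Type*} [Field k] [NonUnitalRing A] [Module k A]
    [SMulCommClass k A A] [IsScalarTower k A A]
    (α : A →ₗ[k] A)
    (havg : ∀ a b : A, α a * α b = α (α a * b) ∧ α a * α b = α (a * α b))
    (lam : k) (R : A →ₗ[k] A)
    (hcomm : ∀ a : A, R (α a) = α (R a))
    (hRB : ∀ a b : A, R a * R b = R (R a * b + a * R b + lam • (a * b))) :
    (let mul : A → A → A := fun a b => R a * b + a * R b + lam • (a * b)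
     -- (A, ∘) is associative
     (∀ a b c : A, mul (mul a b) c = mul a (mul b c)) ∧
     -- α is an averaging operator for ∘
     (∀ a b : A, mul (α a) (α b) = α (mul (α a) b) ∧
                 mul (α a) (α b) = α (mul a (α b))) ∧
     -- R is a homomorphism of averaging algebras from (A, ∘, α) to (A, ·, α)
     (∀ a b : A, R (mul a b) = R a * R b) ∧
     (∀ a : A, R (α a) = α (R a))) := by
  intro mul
  have hm : ∀ a b : A, R (mul a b) = R a * R b := by
    intro a b
    simp only [mul]
    exact (hRB a b).symm
  refine ⟨?_, ?_, hm, hcomm⟩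
  · intro a b c
    show mul (mul a b) c = mul a (mul b c)
    have h1 : R (mul a b) = R a * R b := hm a b
    have h2 : R (mul b c) = R b * R c := hm b c
    simp only [mul] at h1 h2 ⊢
    rw [h1, h2]
    simp only [mul_add, add_mul, smul_add, mul_smul_comm, smul_mul_assoc,
      smul_smul, mul_assoc]
    abel
  · intro a b
    constructor
    · show mul (α a) (α b) = α (mul (α a) b)
      simp only [mul, hcomm, map_add, map_smul]
      rw [(havg (R a) b).1, (havg a (R b)).1, (havg a b).1]
    · show mul (α a) (α b) = α (mul a (α b))
      simp only [mul, hcomm, map_add, map_smul]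
      rw [(havg (R a) b).2, (havg a (R b)).2, (havg a b).2]
end

section
/- Let (A, α) be an averaging algebra and R a Rota-Baxter operator on the associative algebra A (of weight 0) with Rα = αR. Then a ≻ b := R(a)·b and a ≺ b := a·R(b) define an averaging dendriform algebra (A, ≻, ≺, α). -/
/-- a Rota-Baxter operator of weight 0 commuting with α induces an
averaging dendriform algebra (A, ≻, ≺, α) with a ≻ b = R(a)b and a ≺ b = aR(b). -/
theorem stmt12 {k A : Type*} [Field k] [NonUnitalRing A] [Module k A]
    [SMulCommClass k A A] [IsScalarTower k A A]
    (α : A →ₗ[k] A)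
    (havg : ∀ a b : A, α a * α b = α (α a * b) ∧ α a * α b = α (a * α b))
    (R : A →ₗ[k] A)
    (hcomm : ∀ a : A, R (α a) = α (R a))
    (hRB : ∀ a b : A, R a * R b = R (R a * b + a * R b)) :
    -- dendriform axioms for a ≻ b = R a * b, a ≺ b = a * R b
    (∀ a b c : A, (a * R b) * R c = a * R (b * R c + R b * c)) ∧
    (∀ a b c : A, (R a * b) * R c = R a * (b * R c)) ∧
    (∀ a b c : A, R (a * R b + R a * b) * c = R a * (R b * c)) ∧
    -- α is an averaging operator for ≻ and ≺
    (∀ a b : A, R (α a) * α b = α (R (α a) * b) ∧ R (α a) * α b = α (R a * α b)) ∧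
    (∀ a b : A, α a * R (α b) = α (α a * R b) ∧ α a * R (α b) = α (a * R (α b))) := by
  refine ⟨?_, ?_, ?_, ?_, ?_⟩
  · intro a b c
    rw [mul_assoc, hRB, add_comm]
  · intro a b c
    rw [mul_assoc]
  · intro a b c
    rw [add_comm, ← hRB, mul_assoc]
  · intro a b
    constructor
    · rw [hcomm, (havg (R a) b).1, ← hcomm]
    · rw [hcomm, (havg (R a) b).2]
  · intro a b
    constructor
    · rw [hcomm, (havg a (R b)).1]
    · rw [hcomm, (havg a (R b)).2, ← hcomm]
end

section
/- Let (A, ·, α) be a finite-dimensional averaging algebra, (M, ℓ, r) an A-bimodule, and γ₁, γ₂ : M → M, β : A → A linear maps. Suppose (M, ℓ, r, γ₁) and (M, ℓ, r, γ₂) are bimodules over (A, α), (A, ℓ_A, r_A, β) is a bimodule over (A, α), and ℓ(β(a))γ₁(m) = γ₂(ℓ(a)γ₁(m)) = γ₂(ℓ(β(a))m) and r(β(a))γ₁(m) = γ₂(r(a)γ₁(m)) = γ₂(r(β(a))m) for all a, m. Then on the semidirect product A ⋉ M, the map α ⊕ γ₁ is an averaging operator and (A ⋉ M, ℓ_{A⋉M},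 r_{A⋉M}, β ⊕ γ₂) is a bimodule over the averaging algebra (A ⋉ M, α ⊕ γ₁). -/
/-- under the listed compatibility conditions, α ⊕ γ₁ is an
averaging operator on the semidirect product A ⋉ M and
(A ⋉ M, ℓ_{A⋉M}, r_{A⋉M}, β ⊕ γ₂) is a bimodule over (A ⋉ M, α ⊕ γ₁). -/
theorem stmt14 {k A M : Type*} [Field k] [NonUnitalRing A] [Module k A]
    [SMulCommClass k A A] [IsScalarTower k A A] [FiniteDimensional k A]
    [AddCommGroup M] [Module k M]
    (α : A →ₗ[k] A)
    (havg : ∀ a b : A, α a * α b = α (α a * b) ∧ α a * α b = α (a * α b))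
    (ℓ r : A →ₗ[k] M →ₗ[k] M)
    (hbim : (∀ (a b : A) (m : M), ℓ (a * b) m = ℓ a (ℓ b m)) ∧
            (∀ (a b : A) (m : M), r (a * b) m = r b (r a m)) ∧
            (∀ (a b : A) (m : M), r b (ℓ a m) = ℓ a (r b m)))
    (γ₁ γ₂ : M →ₗ[k] M) (β : A →ₗ[k] A)
    (hγ₁ : (∀ (a : A) (m : M), ℓ (α a) (γ₁ m) = γ₁ (ℓ (α a) m)) ∧
           (∀ (a : A) (m : M), γ₁ (ℓ (α a) m) = γ₁ (ℓ a (γ₁ m))) ∧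
           (∀ (a : A) (m : M), r (α a) (γ₁ m) = γ₁ (r (α a) m)) ∧
           (∀ (a : A) (m : M), γ₁ (r (α a) m) = γ₁ (r a (γ₁ m))))
    (hγ₂ : (∀ (a : A) (m : M), ℓ (α a) (γ₂ m) = γ₂ (ℓ (α a) m)) ∧
           (∀ (a : A) (m : M), γ₂ (ℓ (α a) m) = γ₂ (ℓ a (γ₂ m))) ∧
           (∀ (a : A) (m : M), r (α a) (γ₂ m) = γ₂ (r (α a) m)) ∧
           (∀ (a : A) (m : M), γ₂ (r (α a) m) = γ₂ (r a (γ₂ m))))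
    (hβ : (∀ a b : A, α a * β b = β (α a * b)) ∧
          (∀ a b : A, β (α a * b) = β (a * β b)) ∧
          (∀ a b : A, β b * α a = β (b * α a)) ∧
          (∀ a b : A, β (b * α a) = β (β b * a)))
    (hcomp1 : ∀ (a : A) (m : M), ℓ (β a) (γ₁ m) = γ₂ (ℓ a (γ₁ m)) ∧
                                 ℓ (β a) (γ₁ m) = γ₂ (ℓ (β a) m))
    (hcomp2 : ∀ (a : A) (m : M), r (β a) (γ₁ m) = γ₂ (r a (γ₁ m)) ∧
                                 r (β a) (γ₁ m) = γ₂ (r (β a) m)) :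
    (let mul : A × M → A × M → A × M :=
      fun p q => (p.1 * q.1, ℓ p.1 q.2 + r q.1 p.2)
     let abar : A × M → A × M := fun p => (α p.1, γ₁ p.2)
     let dbar : A × M → A × M := fun p => (β p.1, γ₂ p.2)
     -- α ⊕ γ₁ is an averaging operator on A ⋉ M
     (∀ x y : A × M, mul (abar x) (abar y) = abar (mul (abar x) y) ∧
                     mul (abar x) (abar y) = abar (mul x (abar y))) ∧
     -- (A ⋉ M, ℓ_{A⋉M}, r_{A⋉M}, β ⊕ γ₂) is a bimodule over (A ⋉ M, α ⊕ γ₁)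
     (∀ x y : A × M,
        mul (abar x) (dbar y) = dbar (mul (abar x) y) ∧
        dbar (mul (abar x) y) = dbar (mul x (dbar y)) ∧
        mul (dbar y) (abar x) = dbar (mul y (abar x)) ∧
        dbar (mul y (abar x)) = dbar (mul (dbar y) x))) := by
 
  obtain ⟨h1, h2, h3, h4⟩ := hγ₁
  obtain ⟨g1, g2, g3, g4⟩ := hγ₂
  obtain ⟨b1, b2, b3, b4⟩ := hβ
  intro mul abar dbar
  constructor
  · rintro ⟨a, m⟩ ⟨b, n⟩
    constructor
    · simp only [mul, abar, Prod.mk.injEq, map_add]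
      exact ⟨(havg a b).1, by rw [h1, h3, h4]⟩
    · simp only [mul, abar, Prod.mk.injEq, map_add]
      exact ⟨(havg a b).2, by rw [h1 a n, h2, h3]⟩
  · rintro ⟨a, m⟩ ⟨b, n⟩
    refine ⟨?_, ?_, ?_, ?_⟩
    · simp only [mul, abar, dbar, Prod.mk.injEq, map_add]
      exact ⟨b1 a b, by rw [g1, (hcomp2 b m).1]⟩
    · simp only [mul, abar, dbar, Prod.mk.injEq, map_add]
      exact ⟨b2 a b, by rw [g2, ← (hcomp2 b m).1, (hcomp2 b m).2]⟩
    · simp only [mul, abar, dbar, Prod.mk.injEq, map_add]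
      exact ⟨b3 a b, by rw [(hcomp1 b m).1, g3]⟩
    · simp only [mul, abar, dbar, Prod.mk.injEq, map_add]
      exact ⟨b4 a b, by rw [← (hcomp1 b m).1, (hcomp1 b m).2, g4]⟩
end

section
/- Let (A, α) be a commutative averaging algebra with induced perm algebra (A, •) where a • b = α(a)·b, and let (M, μ, β) be a module over (A, α). Define ℓ(a)(m) = μ(α(a))(m) and r(a)(m) = μ(a)(β(m)). Then (M, ℓ, r) is a bimodule over the perm algebra (A, •). -/
/-- for a module (M, μ, β) over a commutative averaging algebra
(A, α), ℓ(a) = μ(α(a)) and r(a) = μ(a)β give a bimodule over the induced perm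
algebra (A, •), a • b = α(a)b. -/
theorem stmt15 {k A M : Type*} [Field k] [NonUnitalCommRing A] [Module k A]
    [SMulCommClass k A A] [IsScalarTower k A A]
    [AddCommGroup M] [Module k M]
    (α : A →ₗ[k] A)
    (havg : ∀ a b : A, α a * α b = α (α a * b) ∧ α a * α b = α (a * α b))
    (μ : A →ₗ[k] M →ₗ[k] M)
    (hmod : ∀ (a b : A) (m : M), μ (a * b) m = μ a (μ b m))
    (β : M →ₗ[k] M)
    (hβ : (∀ (a : A) (m : M), μ (α a) (β m) = β (μ (α a) m)) ∧
          (∀ (a : A) (m : M), β (μ (α a) m) = β (μ a (β m)))) :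
    -- ℓ(a)(m) = μ(α a)(m), r(a)(m) = μ(a)(β m), a • b = α a * b
    (∀ (a b : A) (m : M),
       μ (α (α a * b)) m = μ (α a) (μ (α b) m) ∧
       μ (α a) (μ (α b) m) = μ (α b) (μ (α a) m)) ∧
    (∀ (a b : A) (m : M),
       μ (α a * b) (β m) = μ b (β (μ a (β m))) ∧
       μ b (β (μ a (β m))) = μ b (β (μ (α a) m)) ∧
       μ b (β (μ (α a) m)) = μ (α a) (μ b (β m))) := by
  constructor
  · intro a b m
    constructor
    · rw [← (havg a b).1, hmod]
    · rw [← hmod, ← hmod, mul_comm]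
  · intro a b m
    refine ⟨?_, ?_, ?_⟩
    · rw [mul_comm, hmod, (hβ.1 a m), ← hβ.2]
    · rw [← hβ.2]
    · rw [← hmod, mul_comm, hmod, hβ.1]
end

section
/- Let (P, •) be a finite-dimensional perm algebra and (M, ℓ, r) a bimodule over it. Then (M*, ℓ*, ℓ* − r*) is also a bimodule over (P, •). In particular, (P*, L*, L* − R*) is a bimodule over (P, •), where L, R are left and right multiplication in P. -/
lemma dual_bimod_aux {k P M : Type*} [Field k] [AddCommGroup P] [Module k P]
    [AddCommGroup M] [Module k M]
    (pm : P →ₗ[k] P →ₗ[k] P)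
    (ℓ r : P →ₗ[k] M →ₗ[k] M)
    (h1 : ∀ (a b : P) (m : M), ℓ (pm a b) m = ℓ a (ℓ b m))
    (h2 : ∀ (a b : P) (m : M), ℓ a (ℓ b m) = ℓ b (ℓ a m))
    (h3 : ∀ (a b : P) (m : M), r (pm a b) m = r b (r a m))
    (h4 : ∀ (a b : P) (m : M), r b (r a m) = r b (ℓ a m))
    (h5 : ∀ (a b : P) (m : M), r b (ℓ a m) = ℓ a (r b m)) :
    (∀ (a b : P) (ξ : Module.Dual k M),
        (ℓ (pm a b)).dualMap ξ = (ℓ a).dualMap ((ℓ b).dualMap ξ)) ∧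
    (∀ (a b : P) (ξ : Module.Dual k M),
        (ℓ a).dualMap ((ℓ b).dualMap ξ) = (ℓ b).dualMap ((ℓ a).dualMap ξ)) ∧
    (∀ (a b : P) (ξ : Module.Dual k M),
        ((ℓ (pm a b)).dualMap - (r (pm a b)).dualMap) ξ =
          ((ℓ b).dualMap - (r b).dualMap) (((ℓ a).dualMap - (r a).dualMap) ξ)) ∧
    (∀ (a b : P) (ξ : Module.Dual k M),
        ((ℓ b).dualMap - (r b).dualMap) (((ℓ a).dualMap - (r a).dualMap) ξ) =
          ((ℓ b).dualMap - (r b).dualMap) ((ℓ a).dualMap ξ)) ∧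
    (∀ (a b : P) (ξ : Module.Dual k M),
        ((ℓ b).dualMap - (r b).dualMap) ((ℓ a).dualMap ξ) =
          (ℓ a).dualMap (((ℓ b).dualMap - (r b).dualMap) ξ)) := by
  refine ⟨?_, ?_, ?_, ?_, ?_⟩ <;> intro a b ξ <;> ext m <;>
    simp only [LinearMap.dualMap_apply, LinearMap.sub_apply, LinearMap.coe_comp,
      Function.comp_apply, LinearMap.map_sub]
  · rw [h1, h2]
  · rw [h2]
  · have e1 : ℓ (pm a b) m = ℓ a (ℓ b m) := h1 a b m
    have e2 : r (pm a b) m = r b (r a m) := h3 a b m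
    have e3 : r a (ℓ b m) = r a (r b m) := (h4 b a m).symm
    have e4 : ℓ a (r b m) = r b (ℓ a m) := (h5 a b m).symm
    have e5 : r b (ℓ a m) = r b (r a m) := (h4 a b m).symm
    rw [e1, e2, e3, e4, e5]; abel
  · have e3 : r a (ℓ b m) = r a (r b m) := (h4 b a m).symm
    have e4 : ℓ a (r b m) = r b (ℓ a m) := (h5 a b m).symm
    have e5 : r b (ℓ a m) = r b (r a m) := (h4 a b m).symm
    have e6 : ℓ a (ℓ b m) = ℓ b (ℓ a m) := h2 a b m
    rw [e3, e4, e5, e6]; abel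
  · have e4 : ℓ a (r b m) = r b (ℓ a m) := (h5 a b m).symm
    have e6 : ℓ a (ℓ b m) = ℓ b (ℓ a m) := h2 a b m
    rw [e4, e6]

/-- the dual (M*, ℓ*, ℓ* − r*) of a bimodule (M, ℓ, r) over a perm
algebra (P, •) is again a bimodule; in particular (P*, L*, L* − R*) is a
bimodule over (P, •). -/
theorem stmt16 {k P M : Type*} [Field k] [AddCommGroup P] [Module k P]
    [FiniteDimensional k P] [AddCommGroup M] [Module k M] [FiniteDimensional k M]
    (pm : P →ₗ[k] P →ₗ[k] P)
    (hperm : ∀ a b c : P, pm a (pm b c) = pm (pm a b) c ∧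
                          pm (pm a b) c = pm (pm b a) c)
    (ℓ r : P →ₗ[k] M →ₗ[k] M)
    (hbim : (∀ (a b : P) (m : M), ℓ (pm a b) m = ℓ a (ℓ b m)) ∧
            (∀ (a b : P) (m : M), ℓ a (ℓ b m) = ℓ b (ℓ a m)) ∧
            (∀ (a b : P) (m : M), r (pm a b) m = r b (r a m)) ∧
            (∀ (a b : P) (m : M), r b (r a m) = r b (ℓ a m)) ∧
            (∀ (a b : P) (m : M), r b (ℓ a m) = ℓ a (r b m))) :
    (let ℓ' : P → Module.Dual k M →ₗ[k] Module.Dual k M := fun a => (ℓ a).dualMap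
     let r' : P → Module.Dual k M →ₗ[k] Module.Dual k M :=
       fun a => (ℓ a).dualMap - (r a).dualMap
     (∀ (a b : P) (ξ : Module.Dual k M), ℓ' (pm a b) ξ = ℓ' a (ℓ' b ξ)) ∧
     (∀ (a b : P) (ξ : Module.Dual k M), ℓ' a (ℓ' b ξ) = ℓ' b (ℓ' a ξ)) ∧
     (∀ (a b : P) (ξ : Module.Dual k M), r' (pm a b) ξ = r' b (r' a ξ)) ∧
     (∀ (a b : P) (ξ : Module.Dual k M), r' b (r' a ξ) = r' b (ℓ' a ξ)) ∧
     (∀ (a b : P) (ξ : Module.Dual k M), r' b (ℓ' a ξ) = ℓ' a (r' b ξ))) ∧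
    (let L : P → Module.Dual k P →ₗ[k] Module.Dual k P := fun a => (pm a).dualMap
     let R : P → Module.Dual k P →ₗ[k] Module.Dual k P :=
       fun a => (pm a).dualMap - (pm.flip a).dualMap
     (∀ (a b : P) (ξ : Module.Dual k P), L (pm a b) ξ = L a (L b ξ)) ∧
     (∀ (a b : P) (ξ : Module.Dual k P), L a (L b ξ) = L b (L a ξ)) ∧
     (∀ (a b : P) (ξ : Module.Dual k P), R (pm a b) ξ = R b (R a ξ)) ∧
     (∀ (a b : P) (ξ : Module.Dual k P), R b (R a ξ) = R b (L a ξ)) ∧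
     (∀ (a b : P) (ξ : Module.Dual k P), R b (L a ξ) = L a (R b ξ))) := by
  obtain ⟨h1, h2, h3, h4, h5⟩ := hbim
  constructor
  · exact dual_bimod_aux pm ℓ r h1 h2 h3 h4 h5
  · have g2 : ∀ (a b : P) (m : P), pm a (pm b m) = pm b (pm a m) := fun a b m => by
      rw [(hperm a b m).1, (hperm a b m).2, ← (hperm b a m).1]
    exact dual_bimod_aux pm pm pm.flip
      (fun a b m => (hperm a b m).1.symm)
      g2
      (fun a b m => by simp only [LinearMap.flip_apply]; exact (hperm m a b).1)
      (fun a b m => by simp only [LinearMap.flip_apply]; exact (hperm m a b).2)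
      (fun a b m => by simp only [LinearMap.flip_apply]; exact (hperm a m b).1.symm)
end

section
/- Let (P, •) be a perm algebra and (Q, ∘) a pre-Lie algebra. Then the bracket [p₁⊗q₁, p₂⊗q₂] := (p₁•p₂)⊗(q₁∘q₂) − (p₂•p₁)⊗(q₂∘q₁) makes the tensor product P ⊗ Q a Lie algebra. -/
open scoped TensorProduct

/-- the bracket [p₁⊗q₁, p₂⊗q₂] = (p₁•p₂)⊗(q₁∘q₂) − (p₂•p₁)⊗(q₂∘q₁)
makes P ⊗ Q a Lie algebra, for a perm algebra P and a pre-Lie algebra Q. -/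
theorem stmt19 {k P Q : Type*} [Field k] [AddCommGroup P] [Module k P]
    [AddCommGroup Q] [Module k Q]
    (pm : P →ₗ[k] P →ₗ[k] P)
    (hperm : ∀ a b c : P, pm a (pm b c) = pm (pm a b) c ∧
                          pm (pm a b) c = pm (pm b a) c)
    (ql : Q →ₗ[k] Q →ₗ[k] Q)
    (hpre : ∀ a b c : Q,
      ql (ql a b) c - ql a (ql b c) = ql (ql b a) c - ql b (ql a c)) :
    ∀ B : P ⊗[k] Q →ₗ[k] P ⊗[k] Q →ₗ[k] P ⊗[k] Q,
      (∀ (p₁ p₂ : P) (q₁ q₂ : Q),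
        B (p₁ ⊗ₜ[k] q₁) (p₂ ⊗ₜ[k] q₂)
          = (pm p₁ p₂) ⊗ₜ[k] (ql q₁ q₂) - (pm p₂ p₁) ⊗ₜ[k] (ql q₂ q₁)) →
      (∀ x y : P ⊗[k] Q, B x y = - B y x) ∧
      (∀ x y z : P ⊗[k] Q, B (B x y) z + B (B y z) x + B (B z x) y = 0) := by
  intro B hB
  have hAssoc : ∀ a b c : P, pm a (pm b c) = pm (pm a b) c := fun a b c => (hperm a b c).1
  have hA : ∀ a b c : P, pm (pm a b) c = pm (pm b a) c := fun a b c => (hperm a b c).2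
  have hpre' : ∀ a b c : Q,
      ql (ql a b) c - ql (ql b a) c - ql a (ql b c) + ql b (ql a c) = 0 := by
    intro a b c
    have h := hpre a b c
    calc ql (ql a b) c - ql (ql b a) c - ql a (ql b c) + ql b (ql a c)
        = (ql (ql a b) c - ql a (ql b c)) - (ql (ql b a) c - ql b (ql a c)) := by abel
      _ = 0 := by rw [h, sub_self]
  constructor
  · intro x y
    induction x using TensorProduct.induction_on with
    | zero => simp
    | tmul p₁ q₁ =>
      induction y using TensorProduct.induction_on with
      | zero => simp
      | tmul p₂ q₂ => rw [hB, hB, neg_sub]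
      | add y₁ y₂ h₁ h₂ => simp only [map_add, LinearMap.add_apply, h₁, h₂, neg_add]
    | add x₁ x₂ h₁ h₂ =>
      simp only [map_add, LinearMap.add_apply, h₁, h₂, neg_add]
  · intro x y z
    induction x using TensorProduct.induction_on with
    | zero => simp
    | tmul p₁ q₁ =>
      induction y using TensorProduct.induction_on with
      | zero => simp
      | tmul p₂ q₂ =>
        induction z using TensorProduct.induction_on with
        | zero => simp
        | tmul p₃ q₃ =>
          simp only [hB, map_sub, LinearMap.sub_apply, hB, hAssoc]
          rw [hA p₂ p₁ p₃, hA p₁ p₃ p₂, hA p₃ p₂ p₁]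
          calc _ = pm (pm p₂ p₃) p₁ ⊗ₜ[k] (ql (ql q₂ q₃) q₁ - ql (ql q₃ q₂) q₁
                    - ql q₂ (ql q₃ q₁) + ql q₃ (ql q₂ q₁))
                + pm (pm p₃ p₁) p₂ ⊗ₜ[k] (ql (ql q₃ q₁) q₂ - ql (ql q₁ q₃) q₂
                    - ql q₃ (ql q₁ q₂) + ql q₁ (ql q₃ q₂))
                + pm (pm p₁ p₂) p₃ ⊗ₜ[k] (ql (ql q₁ q₂) q₃ - ql (ql q₂ q₁) q₃
                    - ql q₁ (ql q₂ q₃) + ql q₂ (ql q₁ q₃)) := by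
                simp only [TensorProduct.tmul_sub, TensorProduct.tmul_add]
                abel
            _ = 0 := by
                rw [hpre' q₂ q₃ q₁, hpre' q₃ q₁ q₂, hpre' q₁ q₂ q₃]
                simp
        | add z₁ z₂ h₁ h₂ =>
          simp only [map_add, LinearMap.add_apply]
          calc _ = (B (B (p₁ ⊗ₜ[k] q₁) (p₂ ⊗ₜ[k] q₂)) z₁ + B (B (p₂ ⊗ₜ[k] q₂) z₁) (p₁ ⊗ₜ[k] q₁)
                  + B (B z₁ (p₁ ⊗ₜ[k] q₁)) (p₂ ⊗ₜ[k] q₂))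
              + (B (B (p₁ ⊗ₜ[k] q₁) (p₂ ⊗ₜ[k] q₂)) z₂ + B (B (p₂ ⊗ₜ[k] q₂) z₂) (p₁ ⊗ₜ[k] q₁)
                  + B (B z₂ (p₁ ⊗ₜ[k] q₁)) (p₂ ⊗ₜ[k] q₂)) := by abel
            _ = 0 := by rw [h₁, h₂, add_zero]
      | add y₁ y₂ h₁ h₂ =>
        simp only [map_add, LinearMap.add_apply]
        calc _ = (B (B (p₁ ⊗ₜ[k] q₁) y₁) z + B (B y₁ z) (p₁ ⊗ₜ[k] q₁)
                + B (B z (p₁ ⊗ₜ[k] q₁)) y₁)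
            + (B (B (p₁ ⊗ₜ[k] q₁) y₂) z + B (B y₂ z) (p₁ ⊗ₜ[k] q₁)
                + B (B z (p₁ ⊗ₜ[k] q₁)) y₂) := by
              abel
          _ = 0 := by rw [h₁, h₂, add_zero]
    | add x₁ x₂ h₁ h₂ =>
      simp only [map_add, LinearMap.add_apply]
      calc _ = (B (B x₁ y) z + B (B y z) x₁ + B (B z x₁) y)
          + (B (B x₂ y) z + B (B y z) x₂ + B (B z x₂) y) := by abel
        _ = 0 := by rw [h₁, h₂, add_zero]
end
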